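/- arXiv:1105.4212 — 4 statements merged into one kernel-verified Lean document; each statement's English description precedes it below -/
import Mathlib

section
/- For every composition α there exists a unique standard composition tableau T with shape α and descent composition com(T) = α; it is the canonical filling of α, in which row i is filled (from right to left in increasing order) with the consecutive integers α_1+⋯+α_{i−1}+1, …, α_1+⋯+α_i. -/
/-- `SCTChain α U`: the filling `U` of the diagram of the composition `α`
(cells `0`-indexed, rows numbered from the top) arises from a saturated chain
in the poset `L_C` of compositions, where at each cover step either a new
part `1` is prepended or the leftmost part of a given size is increased by
`1`, and the cell created at the step reaching a composition of size `s` is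
filled with `s`. -/
inductive SCTChain : List ℕ → ((ℕ × ℕ) → ℕ) → Prop
  | nil : SCTChain [] (fun _ => 0)
  | prepend {β : List ℕ} {U : (ℕ × ℕ) → ℕ} (h : SCTChain β U) :
      SCTChain (1 :: β)
        (fun c => if c = (0, 0) then β.sum + 1
          else if c.1 = 0 then 0 else U (c.1 - 1, c.2))
  | grow {β : List ℕ} {U : (ℕ × ℕ) → ℕ} (h : SCTChain β U) (i : ℕ)
      (hi : i < β.length) (hleft : ∀ j < i, β.getD j 0 ≠ β.getD i 0) :
      SCTChain (β.set i (β.getD i 0 + 1))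
        (fun c => if c = (i, β.getD i 0) then β.sum + 1 else U c)

/-- `T` is a standard composition tableau of shape `α ⊨ n`: the filling of
the diagram of `α` obtained from a saturated chain
`∅ = α^{n+1} ⋖ ⋯ ⋖ α^1 = α` in `L_C` by placing entry `i` in the cell in
which `α^i` differs from `α^{i+1}` (so the cell created at the step reaching
size `s` receives the entry `n + 1 - s`); entries are `0` off the diagram. -/
def IsSCT (α : List ℕ) (T : (ℕ × ℕ) → ℕ) : Prop :=
  ∃ U, SCTChain α U ∧ T = fun c => if U c = 0 then 0 else α.sum + 1 - U c

/-- The descent set of a standard composition tableau: those `i` such that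
the entry `i+1` lies in a cell weakly to the right of the cell containing
`i`. -/
def desC (T : (ℕ × ℕ) → ℕ) : Set ℕ :=
  {i | 0 < i ∧ ∃ p q : ℕ × ℕ, T p = i ∧ T q = i + 1 ∧ p.2 ≤ q.2}

/-- `set(α) = {α₁, α₁+α₂, …, α₁+⋯+α_{ℓ(α)-1}}`, the subset of `[n-1]`
associated to a composition `α ⊨ n`; `com(T) = β` iff `desC T = compToSet β`. -/
def compToSet (α : List ℕ) : Set ℕ :=
  {s | ∃ i, 0 < i ∧ i < α.length ∧ s = (α.take i).sum}

/-- The quasisymmetric Schur function `S_α` is F-multiplicity free iff all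
standard composition tableaux of shape `α` have pairwise distinct descent
sets. -/
def FmfSCT (α : List ℕ) : Prop :=
  ∀ T T', IsSCT α T → IsSCT α T' → desC T = desC T' → T = T'

/-- The canonical filling of a composition `α`: row `i` is filled, from right
to left in increasing order, with the consecutive integers
`α₁+⋯+α_{i-1}+1, …, α₁+⋯+α_i`. -/
def canonical (α : List ℕ) : (ℕ × ℕ) → ℕ := fun c =>
  if c.1 < α.length ∧ c.2 < α.getD c.1 0
  then (α.take c.1).sum + α.getD c.1 0 - c.2 else 0


/-!
Read the chain of compositions forwards from `∅`, labelling each new cell by the size of the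
composition it creates (the tableau entry is `n + 1` minus the label). A descent of the tableau
is a step whose new cell is not strictly to the right of the previous one. Parts never shrink
along a chain, so a row that has reached its final length cannot grow again; and prepending a
new row while the top row is still short would produce a descent strictly inside a block of
`set α`. Hence every step of a chain with `des_c T ⊆ set α` is forced: complete the top row,
then prepend, which is exactly how the canonical filling is built.
-/

open Relation

namespace List

theorem sum_take_succ_eq_add_getD (l : List ℕ) (i : ℕ) :
    (l.take (i + 1)).sum = (l.take i).sum + l.getD i 0 := by
  rcases lt_or_ge i l.length with hi | hi
  · rw [sum_take_succ l i hi, getD_eq_getElem l 0 hi]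
  · rw [take_of_length_le hi, take_of_length_le (by omega), getD_eq_default l 0 hi, add_zero]

theorem getD_le_getD_set_getD_succ (l : List ℕ) (i k : ℕ) :
    l.getD k 0 ≤ (l.set i (l.getD i 0 + 1)).getD k 0 := by
  rcases eq_or_ne i k with rfl | hik
  · rcases lt_or_ge i l.length with hi | hi
    · simp [getD_eq_getElem?_getD, hi]
    · rw [getD_eq_default _ _ hi, getD_eq_default _ _ (by simpa using hi)]
  · simp [getD_eq_getElem?_getD, getElem?_set_ne hik]

theorem lt_length_of_lt_getD {l : List ℕ} {i k : ℕ} (h : k < l.getD i 0) : i < l.length := by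
  by_contra hi
  rw [getD_eq_default _ _ (not_lt.1 hi)] at h
  exact Nat.not_lt_zero _ h

theorem getD_pos {l : List ℕ} (hpos : ∀ x ∈ l, 0 < x) {i : ℕ} (hi : i < l.length) :
    0 < l.getD i 0 := by
  rw [getD_eq_getElem _ _ hi]
  exact hpos _ (getElem_mem hi)

end List

def prependLabel (β : List ℕ) (V : ℕ × ℕ → ℕ) : ℕ × ℕ → ℕ := fun c =>
  if c = (0, 0) then β.sum + 1 else if c.1 = 0 then 0 else V (c.1 - 1, c.2)

@[simp]
theorem prependLabel_zero_zero (β : List ℕ) (V : ℕ × ℕ → ℕ) :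
    prependLabel β V (0, 0) = β.sum + 1 := if_pos rfl

@[simp]
theorem prependLabel_succ (β : List ℕ) (V : ℕ × ℕ → ℕ) (i k : ℕ) :
    prependLabel β V (i + 1, k) = V (i, k) := by
  simp [prependLabel]

def growLabel (β : List ℕ) (V : ℕ × ℕ → ℕ) (i : ℕ) : ℕ × ℕ → ℕ := fun c =>
  if c = (i, β.getD i 0) then β.sum + 1 else V c

/-- `SCTChain`, read forwards from an arbitrary starting composition. -/
inductive CoverStep : List ℕ × (ℕ × ℕ → ℕ) → List ℕ × (ℕ × ℕ → ℕ) → Prop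
  | prepend (β : List ℕ) (V : ℕ × ℕ → ℕ) : CoverStep (β, V) (1 :: β, prependLabel β V)
  | grow {β : List ℕ} (V : ℕ × ℕ → ℕ) {i : ℕ} (hi : i < β.length)
      (hleft : ∀ j < i, β.getD j 0 ≠ β.getD i 0) :
      CoverStep (β, V) (β.set i (β.getD i 0 + 1), growLabel β V i)

namespace SCTChain

theorem lt_getD_of_ne_zero {α : List ℕ} {U : ℕ × ℕ → ℕ} (h : SCTChain α U) {c : ℕ × ℕ}
    (hc : U c ≠ 0) : c.2 < α.getD c.1 0 := by
  induction h generalizing c with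
  | nil => exact absurd rfl hc
  | @prepend β V _ ih =>
    obtain ⟨_ | i, j⟩ := c
    · simp_all
    · simpa using ih (c := (i, j)) (by simpa using hc)
  | @grow β V _ i hi _ ih =>
    by_cases hci : c = (i, β.getD i 0)
    · subst hci
      simp [List.getD_eq_getElem?_getD, hi]
    · exact (ih (by simpa only [hci, if_false] using hc)).trans_le
        (β.getD_le_getD_set_getD_succ i c.1)

theorem reflTransGen_coverStep {α : List ℕ} {U : ℕ × ℕ → ℕ} (h : SCTChain α U) :
    ReflTransGen CoverStep ([], fun _ => 0) (α, U) := by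
  induction h with
  | nil => exact .refl
  | prepend _ ih => exact ih.tail (.prepend _ _)
  | grow _ _ hi hleft ih => exact ih.tail (.grow _ hi hleft)

end SCTChain

namespace CoverStep

variable {x y : List ℕ × (ℕ × ℕ → ℕ)}

theorem sctChain (h : CoverStep x y) (hx : SCTChain x.1 x.2) : SCTChain y.1 y.2 := by
  cases h with
  | prepend => exact hx.prepend
  | grow V hi hleft => exact hx.grow _ hi hleft

theorem sctChain_of_reflTransGen (h : ReflTransGen CoverStep x y) (hx : SCTChain x.1 x.2) :
    SCTChain y.1 y.2 := by
  induction h with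
  | refl => exact hx
  | tail _ hst ih => exact hst.sctChain ih

theorem length_le_of_reflTransGen (h : ReflTransGen CoverStep x y) :
    x.1.length ≤ y.1.length := by
  induction h with
  | refl => rfl
  | tail _ hst ih =>
    cases hst with
    | prepend => exact ih.trans (Nat.le_succ _)
    | grow => simpa using ih

theorem getD_le_of_reflTransGen (h : ReflTransGen CoverStep x y) (k : ℕ) :
    x.1.getD k 0 ≤ y.1.getD (k + (y.1.length - x.1.length)) 0 := by
  induction h with
  | refl => simp
  | tail hxy hst ih =>
    have hlen := length_le_of_reflTransGen hxy
    cases hst with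
    | prepend β V =>
      dsimp only at ih hlen ⊢
      rw [List.length_cons, show k + (β.length + 1 - x.1.length)
        = k + (β.length - x.1.length) + 1 by omega, List.getD_cons_succ]
      exact ih
    | grow V hi =>
      dsimp only at ih hlen ⊢
      rw [List.length_set]
      exact ih.trans (List.getD_le_getD_set_getD_succ _ _ _)

/-- Only prepending changes the number of rows, and it pushes every cell down by one. -/
theorem label_eq_of_reflTransGen (h : ReflTransGen CoverStep x y) (hx : SCTChain x.1 x.2)
    {c : ℕ × ℕ} (hc : x.2 c ≠ 0) : y.2 (c.1 + (y.1.length - x.1.length), c.2) = x.2 c := by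
  induction h with
  | refl => simp
  | tail hxy hst ih =>
    have hlen := length_le_of_reflTransGen hxy
    cases hst with
    | prepend β V =>
      dsimp only at ih hlen ⊢
      rw [List.length_cons, show c.1 + (β.length + 1 - x.1.length)
        = c.1 + (β.length - x.1.length) + 1 by omega, prependLabel_succ, ih]
    | @grow β V i hi =>
      have hlt := (sctChain_of_reflTransGen hxy hx).lt_getD_of_ne_zero (ih ▸ hc)
      dsimp only at ih hlt ⊢
      simp only [growLabel, List.length_set]
      have hcell : (c.1 + (β.length - x.1.length), c.2) ≠ (i, β.getD i 0) := fun h => by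
        rw [(Prod.mk.inj h).1, (Prod.mk.inj h).2] at hlt
        exact lt_irrefl _ hlt
      rw [if_neg hcell, ih]

end CoverStep

def canonicalLabel (α : List ℕ) : ℕ × ℕ → ℕ := fun c =>
  if c.2 < α.getD c.1 0 then (α.drop (c.1 + 1)).sum + c.2 + 1 else 0

/-- `IsSCT α T` says `T = tableauOfLabel α.sum U` for some `U` with `SCTChain α U`. -/
def tableauOfLabel (n : ℕ) (U : ℕ × ℕ → ℕ) : ℕ × ℕ → ℕ := fun c =>
  if U c = 0 then 0 else n + 1 - U c

theorem canonicalLabel_of_lt {α : List ℕ} {i k : ℕ} (h : k < α.getD i 0) :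
    canonicalLabel α (i, k) = (α.drop (i + 1)).sum + k + 1 := if_pos h

theorem canonicalLabel_nil : canonicalLabel [] = fun _ => 0 := by
  funext c
  simp [canonicalLabel]

theorem canonicalLabel_cons_one (l : List ℕ) :
    canonicalLabel (1 :: l) = prependLabel l (canonicalLabel l) := by
  funext c
  obtain ⟨_ | i, k⟩ := c
  · rcases k with _ | k <;> simp [canonicalLabel, prependLabel]
  · simp [canonicalLabel, prependLabel]

theorem canonicalLabel_cons_succ (j : ℕ) (l : List ℕ) :
    canonicalLabel ((j + 1) :: l) = growLabel (j :: l) (canonicalLabel (j :: l)) 0 := by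
  funext c
  obtain ⟨_ | i, k⟩ := c
  · simp only [canonicalLabel, growLabel, List.getD_cons_zero, List.drop_succ_cons, List.drop_zero,
      Prod.mk.injEq, true_and, List.sum_cons]
    split_ifs <;> omega
  · simp [canonicalLabel, growLabel]

theorem sctChain_canonicalLabel {α : List ℕ} (hpos : ∀ x ∈ α, 0 < x) :
    SCTChain α (canonicalLabel α) := by
  induction α with
  | nil => rw [canonicalLabel_nil]; exact .nil
  | cons a l ih =>
    have hl := ih fun x hx => hpos x (List.mem_cons_of_mem _ hx)
    obtain ⟨j, rfl⟩ := Nat.exists_eq_add_one.2 (hpos a List.mem_cons_self)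
    clear hpos
    induction j with
    | zero => rw [canonicalLabel_cons_one]; exact hl.prepend
    | succ j ihj =>
      rw [canonicalLabel_cons_succ]
      exact ihj.grow 0 (by simp) (by simp)

theorem tableauOfLabel_canonicalLabel (α : List ℕ) :
    tableauOfLabel α.sum (canonicalLabel α) = canonical α := by
  funext ⟨i, k⟩
  simp only [tableauOfLabel, canonicalLabel, canonical]
  by_cases hk : k < α.getD i 0
  · rw [if_pos hk, if_neg (by omega), if_pos ⟨List.lt_length_of_lt_getD hk, hk⟩]
    have := α.sum_take_add_sum_drop (i + 1)
    have := α.sum_take_succ_eq_add_getD i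
    omega
  · rw [if_neg hk, if_pos rfl, if_neg fun h => hk h.2]

theorem lt_getD_of_canonical_ne_zero {α : List ℕ} {c : ℕ × ℕ} (h : canonical α c ≠ 0) :
    c.2 < α.getD c.1 0 := by
  by_contra hc
  exact h (if_neg fun h' => hc h'.2)

theorem canonical_of_lt {α : List ℕ} {i k : ℕ} (h : k < α.getD i 0) :
    canonical α (i, k) = (α.take i).sum + α.getD i 0 - k :=
  if_pos ⟨List.lt_length_of_lt_getD h, h⟩

theorem desC_canonical {α : List ℕ} (hpos : ∀ x ∈ α, 0 < x) :
    desC (canonical α) = compToSet α := by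
  ext s
  constructor
  · rintro ⟨hs, ⟨i, k⟩, ⟨i', k'⟩, hp, hq, hkk'⟩
    have hk := lt_getD_of_canonical_ne_zero (hp ▸ hs.ne')
    have hk' := lt_getD_of_canonical_ne_zero (c := (i', k')) (by rw [hq]; omega)
    rw [canonical_of_lt hk] at hp
    rw [canonical_of_lt hk'] at hq
    dsimp only at hk hk' hkk' hp hq
    have hsucc := α.sum_take_succ_eq_add_getD i
    have hsucc' := α.sum_take_succ_eq_add_getD i'
    rcases lt_trichotomy i' i with hlt | rfl | hgt
    · have : (α.take (i' + 1)).sum ≤ (α.take i).sum := List.monotone_sum_take α hlt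
      omega
    · omega
    · have : (α.take (i + 1)).sum ≤ (α.take i').sum := List.monotone_sum_take α hgt
      exact ⟨i + 1, i.succ_pos, by have := List.lt_length_of_lt_getD hk'; omega, by omega⟩
  · rintro ⟨_ | m, hk0, hkl, rfl⟩
    · exact absurd hk0 (lt_irrefl 0)
    have hm := List.getD_pos hpos (i := m) (by omega)
    have hm1 := List.getD_pos hpos hkl
    have hsucc := α.sum_take_succ_eq_add_getD m
    refine ⟨by omega, (m, 0), (m + 1, α.getD (m + 1) 0 - 1), ?_, ?_, Nat.zero_le _⟩
    · rw [canonical_of_lt hm]; omega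
    · rw [canonical_of_lt (by omega)]; omega

theorem sub_mem_desC_tableauOfLabel {U : ℕ × ℕ → ℕ} {n s : ℕ} {p q : ℕ × ℕ}
    (hp : U p = s + 1) (hq : U q = s) (hs : 0 < s) (hsn : s < n) (hpq : p.2 ≤ q.2) :
    n - s ∈ desC (tableauOfLabel n U) := by
  refine ⟨Nat.sub_pos_of_lt hsn, p, q, ?_, ?_, hpq⟩
  · simp only [tableauOfLabel, hp, Nat.add_one_ne_zero, if_false]; omega
  · simp only [tableauOfLabel, hq, hs.ne', if_false]; omega

theorem not_mem_compToSet_of_lt_of_lt {α : List ℕ} {r s : ℕ} (h1 : (α.take r).sum < s)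
    (h2 : s < (α.take (r + 1)).sum) : s ∉ compToSet α := by
  rintro ⟨k, -, -, rfl⟩
  rcases le_or_gt k r with hk | hk
  · exact absurd (List.monotone_sum_take α hk) (not_le.2 h1)
  · exact absurd (List.monotone_sum_take α hk) (not_le.2 h2)

/-- The compositions through which the canonical chain of `α` passes. -/
def IsCanonicalStage (α β : List ℕ) : Prop :=
  β = [] ∨ ∃ r j, r < α.length ∧ 0 < j ∧ j ≤ α.getD r 0 ∧ β = j :: α.drop (r + 1)

namespace CoverStep

variable {α : List ℕ} {U : ℕ × ℕ → ℕ}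

theorem getD_lt_of_reflTransGen_set {β : List ℕ} {i : ℕ} (hi : i < β.length)
    {W : ℕ × ℕ → ℕ} (h : ReflTransGen CoverStep (β.set i (β.getD i 0 + 1), W) (α, U)) :
    β.getD i 0 < α.getD (i + (α.length - β.length)) 0 := by
  have := getD_le_of_reflTransGen h i
  simp only [List.length_set] at this
  rwa [List.getD_eq_getElem _ _ (by simpa using hi), List.getElem_set_self] at this

/-- Prepending a new row while the top row is still shorter than its target creates a descent
strictly inside a block of `set α`. -/
theorem not_reflTransGen_prepend_of_lt {r j : ℕ}
    (hdes : desC (tableauOfLabel α.sum U) ⊆ compToSet α) (hj : 0 < j) (hjr : j < α.getD r 0)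
    (hchain : SCTChain (j :: α.drop (r + 1)) (canonicalLabel (j :: α.drop (r + 1))))
    (h : ReflTransGen CoverStep (1 :: j :: α.drop (r + 1),
      prependLabel (j :: α.drop (r + 1)) (canonicalLabel (j :: α.drop (r + 1)))) (α, U)) :
    False := by
  set β := j :: α.drop (r + 1)
  have hβ : β.sum = (α.drop (r + 1)).sum + (j - 1) + 1 := by
    simp only [β, List.sum_cons]; omega
  have hq0 : prependLabel β (canonicalLabel β) (1, j - 1) = β.sum :=
    (prependLabel_succ β _ 0 (j - 1)).trans
      ((canonicalLabel_of_lt (by simp [β]; omega)).trans hβ.symm)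
  have hp : U (0 + (α.length - (β.length + 1)), 0) = β.sum + 1 :=
    (label_eq_of_reflTransGen h hchain.prepend (c := (0, 0)) (by simp)).trans
      (prependLabel_zero_zero β (canonicalLabel β))
  have hq : U (1 + (α.length - (β.length + 1)), j - 1) = β.sum :=
    (label_eq_of_reflTransGen h hchain.prepend (c := (1, j - 1))
      (hq0.trans_ne (by omega))).trans hq0
  have hsplit := α.sum_take_add_sum_drop (r + 1)
  have hsucc := α.sum_take_succ_eq_add_getD r
  refine not_mem_compToSet_of_lt_of_lt (r := r) ?_ ?_
    (hdes (sub_mem_desC_tableauOfLabel hp hq (by omega) (by omega) (Nat.zero_le _))) <;> omega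

theorem eq_canonicalLabel_and_isCanonicalStage (hpos : ∀ x ∈ α, 0 < x)
    (hdes : desC (tableauOfLabel α.sum U) ⊆ compToSet α) {β : List ℕ}
    {y : List ℕ × (ℕ × ℕ → ℕ)} (hstep : CoverStep (β, canonicalLabel β) y)
    (hy : ReflTransGen CoverStep y (α, U)) (hchain : SCTChain β (canonicalLabel β))
    (hβ : IsCanonicalStage α β) :
    y.2 = canonicalLabel y.1 ∧ IsCanonicalStage α y.1 := by
  have hlen := length_le_of_reflTransGen hy
  rcases hβ with rfl | ⟨r, j, hr, hj, hjr, rfl⟩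
  · cases hstep with
    | prepend =>
      refine ⟨(canonicalLabel_cons_one []).symm, .inr ⟨α.length - 1, 1, by simp at hlen; omega,
        one_pos, List.getD_pos hpos (by simp at hlen; omega), ?_⟩⟩
      rw [Nat.sub_add_cancel (by simpa using hlen), List.drop_length]
    | grow _ hi => exact absurd hi (Nat.not_lt_zero _)
  · cases hstep with
    | prepend =>
      obtain rfl | hjr := hjr.eq_or_lt
      · obtain ⟨r, rfl⟩ : ∃ r', r = r' + 1 := Nat.exists_eq_add_one.2 (by simp at hlen; omega)
        refine ⟨(canonicalLabel_cons_one _).symm,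
          .inr ⟨r, 1, by omega, one_pos, List.getD_pos hpos (by omega), ?_⟩⟩
        rw [List.drop_eq_getElem_cons hr, List.getD_eq_getElem _ _ hr]
      · exact (not_reflTransGen_prepend_of_lt hdes hj hjr hchain hy).elim
    | @grow _ _ i hi =>
      -- only a row shorter than its final length can grow, and below the top all rows are full
      have hlt := getD_lt_of_reflTransGen_set hi hy
      have hoff : α.length - (j :: α.drop (r + 1)).length = r := by simp; omega
      rw [hoff] at hlt
      rcases i with _ | i
      · exact ⟨(canonicalLabel_cons_succ _ _).symm,
          .inr ⟨r, j + 1, hr, j.succ_pos, by simpa using hlt, rfl⟩⟩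
      · rw [List.getD_cons_succ, List.getD_eq_getElem?_getD, List.getD_eq_getElem?_getD,
          List.getElem?_drop, show r + 1 + i = i + 1 + r by omega] at hlt
        exact (lt_irrefl _ hlt).elim

theorem eq_canonicalLabel_of_reflTransGen (hpos : ∀ x ∈ α, 0 < x)
    (hdes : desC (tableauOfLabel α.sum U) ⊆ compToSet α) {x : List ℕ × (ℕ × ℕ → ℕ)}
    (h : ReflTransGen CoverStep x (α, U)) (hchain : SCTChain x.1 x.2)
    (hx : x.2 = canonicalLabel x.1) (hstage : IsCanonicalStage α x.1) : U = canonicalLabel α := by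
  induction h using Relation.ReflTransGen.head_induction_on with
  | refl => exact hx
  | @head x y hxy hy ih =>
    obtain ⟨β, V⟩ := x
    dsimp only at hchain hx hstage
    subst hx
    obtain ⟨hy₂, hy₁⟩ := hxy.eq_canonicalLabel_and_isCanonicalStage hpos hdes hy hchain hstage
    exact ih (hxy.sctChain hchain) hy₂ hy₁

end CoverStep

/-- For every composition `α` there exists a unique standard composition
tableau `T` of shape `α` with descent composition `com(T) = α`, namely the
canonical filling of `α`. -/
theorem unique_sct_with_descent_comp_alpha (α : List ℕ) (hpos : ∀ x ∈ α, 0 < x) :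
    (IsSCT α (canonical α) ∧ desC (canonical α) = compToSet α) ∧
    ∀ T, IsSCT α T → desC T = compToSet α → T = canonical α := by
  refine ⟨⟨⟨canonicalLabel α, sctChain_canonicalLabel hpos, (tableauOfLabel_canonicalLabel α).symm⟩,
    desC_canonical hpos⟩, ?_⟩
  rintro T ⟨U, hU, rfl⟩ hdes
  rw [CoverStep.eq_canonicalLabel_of_reflTransGen hpos hdes.subset hU.reflTransGen_coverStep .nil
    canonicalLabel_nil.symm (.inl rfl)]
  exact tableauOfLabel_canonicalLabel α
end

section
/- Let α = (α_1,…,α_k) be a composition such that for some index i the pair of consecutive parts (α_i, α_{i+1}) does not belong to {(m,1) : m ≥ 1} ∪ {(1,2)}. Then there exists a standard composition tableau T' of shape α with com(T') ≠ α. -/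
def chainTableau (n : ℕ) (U : ℕ × ℕ → ℕ) : ℕ × ℕ → ℕ :=
  fun c => if U c = 0 then 0 else n + 1 - U c

lemma List.sum_set_getD_add_one : ∀ (l : List ℕ) {i : ℕ}, i < l.length →
    (l.set i (l.getD i 0 + 1)).sum = l.sum + 1
  | [], _, h => absurd h (by simp)
  | _ :: _, 0, _ => by simp only [List.set_cons_zero, List.getD_cons_zero, List.sum_cons]; omega
  | _ :: l, i + 1, h => by
    simp only [List.set_cons_succ, List.getD_cons_succ, List.sum_cons]
    rw [List.sum_set_getD_add_one l (by simpa using h)]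
    omega

namespace SCTChain

variable {α : List ℕ} {U : ℕ × ℕ → ℕ}

lemma le_sum (h : SCTChain α U) (c : ℕ × ℕ) : U c ≤ α.sum := by
  induction h generalizing c with
  | nil => simp
  | prepend _ ih =>
    have := ih (c.1 - 1, c.2)
    simp only [List.sum_cons]
    split_ifs <;> omega
  | grow _ i hi _ ih =>
    have := ih c
    rw [List.sum_set_getD_add_one _ hi]
    dsimp only
    split_ifs <;> omega

lemma eq_of_apply_eq (h : SCTChain α U) {p q : ℕ × ℕ} (hp : U p ≠ 0) (hpq : U p = U q) :
    p = q := by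
  induction h generalizing p q with
  | nil => exact absurd rfl hp
  | @prepend α U h ih =>
    obtain ⟨p1, p2⟩ := p
    obtain ⟨q1, q2⟩ := q
    have hbp := h.le_sum (p1 - 1, p2)
    have hbq := h.le_sum (q1 - 1, q2)
    simp only [Prod.mk.injEq] at hp hpq ih ⊢
    split_ifs at hp hpq <;> try omega
    have := ih hp hpq
    simp only [Prod.mk.injEq] at this
    omega
  | @grow α U h i _ _ ih =>
    have hbp := h.le_sum p
    have hbq := h.le_sum q
    dsimp only at hp hpq
    split_ifs at hp hpq with h1 h2 h2
    · exact h1.trans h2.symm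
    · omega
    · omega
    · exact ih hp hpq

lemma grow_second {x y : ℕ} (h : SCTChain (x :: y :: α) U) (hxy : x ≠ y) :
    SCTChain (x :: (y + 1) :: α)
      (fun c => if c = (1, y) then x + y + α.sum + 1 else U c) := by
  have := h.grow 1 (by simp) (fun j hj => by
    obtain rfl : j = 0 := by omega
    simpa using hxy)
  simpa [add_assoc] using this

lemma exists_grow_head {x : ℕ} (h : SCTChain (x :: α) U) (k : ℕ) :
    ∃ U', SCTChain ((x + k) :: α) U' ∧ (∀ c : ℕ × ℕ, (c.1 ≠ 0 ∨ c.2 < x) → U' c = U c) ∧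
      ∀ j < k, U' (0, x + j) = x + α.sum + 1 + j := by
  induction k with
  | zero => exact ⟨U, h, fun _ _ => rfl, fun _ hj => absurd hj (Nat.not_lt_zero _)⟩
  | succ k ih =>
    obtain ⟨U', hU', hold, hnew⟩ := ih
    have := hU'.grow 0 (by simp) (fun _ hj => absurd hj (Nat.not_lt_zero _))
    simp only [List.set_cons_zero, List.getD_cons_zero, List.sum_cons] at this
    refine ⟨_, this, fun c hc => ?_, fun j hj => ?_⟩
    · rw [if_neg (by rintro rfl; omega), hold c hc]
    · split_ifs with hjk
      · simp only [Prod.mk.injEq, true_and] at hjk; omega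
      · exact hnew j (by simp only [Prod.mk.injEq, true_and] at hjk; omega)

lemma exists_cons (h : SCTChain α U) {a : ℕ} (ha : 0 < a) :
    ∃ U', SCTChain (a :: α) U' ∧ (∀ r c, U' (r + 1, c) = U (r, c)) ∧
      ∀ j < a, U' (0, j) = α.sum + 1 + j := by
  obtain ⟨U', hU', hold, hnew⟩ := h.prepend.exists_grow_head (a - 1)
  rw [Nat.add_sub_cancel' ha] at hU'
  refine ⟨U', hU', fun r c => ?_, fun j hj => ?_⟩
  · rw [hold _ (Or.inl (Nat.succ_ne_zero r))]
    simp
  · rcases j with _ | j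
    · rw [hold _ (Or.inr Nat.zero_lt_one)]
      simp
    · have := hnew j (Nat.lt_sub_of_add_lt hj)
      rw [add_comm j 1, this]
      omega

lemma exists_append (h : SCTChain α U) {u : List ℕ} (hu : ∀ x ∈ u, 0 < x) :
    ∃ U', SCTChain (u ++ α) U' ∧ ∀ r c, U' (r + u.length, c) = U (r, c) := by
  induction u with
  | nil => exact ⟨U, h, fun _ _ => rfl⟩
  | cons x u ih =>
    obtain ⟨U', hU', hU'U⟩ := ih fun y hy => hu y (List.mem_cons_of_mem x hy)
    obtain ⟨U'', hU'', hU''U', -⟩ := hU'.exists_cons (hu x List.mem_cons_self)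
    exact ⟨U'', hU'', fun r c => by rw [← hU'U, ← hU''U']; rfl⟩

lemma isSCT (h : SCTChain α U) : IsSCT α (chainTableau α.sum U) := ⟨U, h, rfl⟩

lemma chainTableau_eq_iff (h : SCTChain α U) {s : ℕ} (hs : 0 < s) (hsn : s ≤ α.sum)
    (p : ℕ × ℕ) : chainTableau α.sum U p = α.sum + 1 - s ↔ U p = s := by
  have := h.le_sum p
  unfold chainTableau
  split_ifs <;> omega

lemma sub_mem_desC_iff (h : SCTChain α U) {s : ℕ} (hs : 0 < s) {x y : ℕ × ℕ}
    (hx : U x = s + 1) (hy : U y = s) :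
    α.sum - s ∈ desC (chainTableau α.sum U) ↔ x.2 ≤ y.2 := by
  have hsn : s + 1 ≤ α.sum := hx ▸ h.le_sum x
  have hentry : α.sum - s = α.sum + 1 - (s + 1) := by omega
  have hnext : α.sum - s + 1 = α.sum + 1 - s := by omega
  constructor
  · rintro ⟨-, p, q, hp, hq, hpq⟩
    rw [hentry, h.chainTableau_eq_iff (by omega) hsn, ← hx] at hp
    rw [hnext, h.chainTableau_eq_iff hs (by omega), ← hy] at hq
    rwa [h.eq_of_apply_eq (by omega) hp, h.eq_of_apply_eq (by omega) hq] at hpq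
  · intro hxy
    refine ⟨by omega, x, y, ?_, ?_, hxy⟩
    · rw [hentry, h.chainTableau_eq_iff (by omega) hsn, hx]
    · rw [hnext, h.chainTableau_eq_iff hs (by omega), hy]

end SCTChain

lemma exists_sctChain {t : List ℕ} (ht : ∀ x ∈ t, 0 < x) : ∃ U, SCTChain t U := by
  obtain ⟨U, hU, -⟩ := SCTChain.nil.exists_append ht
  exact ⟨U, by simpa using hU⟩

def HasSplitStep (α : List ℕ) : Prop :=
  ∃ (UA UB : ℕ × ℕ → ℕ) (s : ℕ) (xA yA xB yB : ℕ × ℕ),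
    SCTChain α UA ∧ SCTChain α UB ∧ 0 < s ∧
    UA xA = s + 1 ∧ UA yA = s ∧ yA.2 < xA.2 ∧ UB xB = s + 1 ∧ UB yB = s ∧ xB.2 ≤ yB.2

namespace HasSplitStep

variable {α : List ℕ}

lemma exists_desC_ne_compToSet (h : HasSplitStep α) :
    ∃ T, IsSCT α T ∧ desC T ≠ compToSet α := by
  obtain ⟨UA, UB, s, xA, yA, xB, yB, hA, hB, hs, hxA, hyA, hAstrict, hxB, hyB, hBweak⟩ := h
  have hdesC_ne : desC (chainTableau α.sum UA) ≠ desC (chainTableau α.sum UB) := fun heq =>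
    absurd ((hA.sub_mem_desC_iff hs hxA hyA).1 (heq ▸ (hB.sub_mem_desC_iff hs hxB hyB).2 hBweak))
      (not_le.2 hAstrict)
  by_cases hAset : desC (chainTableau α.sum UA) = compToSet α
  · exact ⟨_, hB.isSCT, fun hBset => hdesC_ne (hAset.trans hBset.symm)⟩
  · exact ⟨_, hA.isSCT, hAset⟩

lemma append_left (h : HasSplitStep α) {u : List ℕ} (hu : ∀ x ∈ u, 0 < x) :
    HasSplitStep (u ++ α) := by
  obtain ⟨UA, UB, s, xA, yA, xB, yB, hA, hB, hs, hxA, hyA, hAstrict, hxB, hyB, hBweak⟩ := h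
  obtain ⟨UA', hA', hUA'⟩ := hA.exists_append hu
  obtain ⟨UB', hB', hUB'⟩ := hB.exists_append hu
  let shift : ℕ × ℕ → ℕ × ℕ := fun c => (c.1 + u.length, c.2)
  refine ⟨UA', UB', s, shift xA, shift yA, shift xB, shift yB, hA', hB', hs, ?_, ?_, hAstrict,
    ?_, ?_, hBweak⟩
  · rw [hUA', hxA]
  · rw [hUA', hyA]
  · rw [hUB', hxB]
  · rw [hUB', hyB]

end HasSplitStep

lemma hasSplitStep_cons_cons_of_three_le {a b : ℕ} {t : List ℕ} (ha : 0 < a) (hb : 3 ≤ b)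
    (ht : ∀ x ∈ t, 0 < x) : HasSplitStep (a :: b :: t) := by
  -- `UA` fills `b - 1` cells of row 1, then `(0, 0)`, then `(1, b - 1)`; `UB` fills row 1, then
  -- row 0. The steps `t.sum + b` and `t.sum + b + 1` are `(0, 0)`, `(1, b - 1)` resp. the reverse.
  obtain ⟨V, hV⟩ := exists_sctChain ht
  obtain ⟨UA₁, hUA₁, -, -⟩ := hV.exists_cons (a := b - 1) (by omega)
  obtain ⟨UA, hUA, hUA_old, -⟩ :=
    (hUA₁.prepend.grow_second (by omega : 1 ≠ b - 1)).exists_grow_head (a - 1)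
  rw [Nat.add_sub_cancel' ha, Nat.sub_add_cancel (by omega : 1 ≤ b)] at hUA
  obtain ⟨UB₁, hUB₁, -, hUB₁_new⟩ := hV.exists_cons (a := b) (by omega)
  obtain ⟨UB, hUB, hUB_old, hUB_new⟩ := hUB₁.exists_cons ha
  refine ⟨UA, UB, t.sum + b, (1, b - 1), (0, 0), (0, 0), (1, b - 1), hUA, hUB, by omega,
    ?_, ?_, by simp only; omega, ?_, ?_, Nat.zero_le _⟩
  · rw [hUA_old _ (Or.inl one_ne_zero)]
    simp only [if_true, List.sum_cons]
    omega
  · rw [hUA_old _ (Or.inr zero_lt_one)]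
    simp only [Prod.mk.injEq, zero_ne_one, false_and, ↓reduceIte, List.sum_cons]
    omega
  · rw [hUB_new 0 ha]
    simp only [List.sum_cons]
    omega
  · rw [hUB_old 0, hUB₁_new _ (by omega)]
    omega

lemma hasSplitStep_cons_two {a : ℕ} {t : List ℕ} (ha : 2 ≤ a) (ht : ∀ x ∈ t, 0 < x) :
    HasSplitStep (a :: 2 :: t) := by
  -- `UA` fills `(1, 0)`, `(1, 1)`, `(0, 0)`, `(0, 1)`; `UB` fills `(1, 0)`, `(0, 0)`, `(0, 1)`,
  -- `(1, 1)`; both then complete row 0.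
  obtain ⟨V, hV⟩ := exists_sctChain ht
  obtain ⟨UA₁, hUA₁, -, -⟩ := hV.exists_cons (a := 2) two_pos
  obtain ⟨UA₂, hUA₂, -, hUA₂_new⟩ := hUA₁.exists_cons (a := 2) two_pos
  obtain ⟨UA, hUA, hUA_old, -⟩ := hUA₂.exists_grow_head (a - 2)
  rw [Nat.add_sub_cancel' ha] at hUA
  obtain ⟨UB₁, hUB₁, hUB₁_old, hUB₁_new⟩ := hV.prepend.prepend.exists_grow_head 1
  obtain ⟨UB, hUB, hUB_old, -⟩ := (hUB₁.grow_second (by omega)).exists_grow_head (a - 2)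
  rw [Nat.add_sub_cancel' ha] at hUB
  refine ⟨UA, UB, t.sum + 3, (0, 1), (0, 0), (1, 1), (0, 1), hUA, hUB, by omega,
    ?_, ?_, zero_lt_one, ?_, ?_, le_refl 1⟩
  · rw [hUA_old _ (Or.inr one_lt_two), hUA₂_new 1 one_lt_two]
    simp only [List.sum_cons]
    omega
  · rw [hUA_old _ (Or.inr two_pos), hUA₂_new 0 two_pos]
    simp only [List.sum_cons]
    omega
  · rw [hUB_old _ (Or.inl one_ne_zero)]
    simp only [if_true]
    omega
  · rw [hUB_old _ (Or.inr one_lt_two)]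
    simp only [Prod.mk.injEq, zero_ne_one, and_true, ↓reduceIte, hUB₁_new 0 one_pos, List.sum_cons]
    omega

lemma hasSplitStep_cons_cons {a b : ℕ} {t : List ℕ} (ha : 0 < a) (hb : 0 < b)
    (ht : ∀ x ∈ t, 0 < x) (hab : ¬(b = 1 ∨ (a = 1 ∧ b = 2))) :
    HasSplitStep (a :: b :: t) := by
  rcases Nat.lt_or_ge b 3 with hb3 | hb3
  · obtain rfl : b = 2 := by omega
    exact hasSplitStep_cons_two (by omega) ht
  · exact hasSplitStep_cons_cons_of_three_le ha hb3 ht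

/-- If some pair of consecutive parts `(αᵢ, αᵢ₊₁)` of the composition `α`
does not belong to `{(m,1) : m ≥ 1} ∪ {(1,2)}`, then there is a standard
composition tableau `T'` of shape `α` with `com(T') ≠ α`. -/
theorem exists_sct_with_other_descent_comp (α : List ℕ) (hpos : ∀ x ∈ α, 0 < x)
    (i : ℕ) (hi : i + 1 < α.length)
    (hpair : ¬(α.getD (i + 1) 0 = 1 ∨
      (α.getD i 0 = 1 ∧ α.getD (i + 1) 0 = 2))) :
    ∃ T', IsSCT α T' ∧ desC T' ≠ compToSet α := by
  have hi' : i < α.length := by omega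
  rw [List.getD_eq_getElem _ _ hi', List.getD_eq_getElem _ _ hi] at hpair
  have hα : α = α.take i ++ α[i] :: α[i + 1] :: α.drop (i + 2) := by
    rw [← List.drop_eq_getElem_cons hi, ← List.drop_eq_getElem_cons hi', List.take_append_drop]
  have hsplit : HasSplitStep (α[i] :: α[i + 1] :: α.drop (i + 2)) :=
    hasSplitStep_cons_cons (hpos _ (List.getElem_mem hi')) (hpos _ (List.getElem_mem hi))
      (fun x hx => hpos x (List.mem_of_mem_drop hx)) hpair
  refine HasSplitStep.exists_desC_ne_compToSet ?_
  rw [hα]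
  exact hsplit.append_left fun x hx => hpos x (List.mem_of_mem_take hx)
end

section
/- For n ≥ 5: (a) the map T ↦ des_c(T) is a bijection from the set of standard composition tableaux of shape (n−2, 2) onto {{n−2}} ∪ {{i, n−1} : 1 ≤ i ≤ n−3}; (b) the map T ↦ des_c(T) is a bijection from the set of standard composition tableaux of shape (2, n−2) onto {{i} : 2 ≤ i ≤ n−3} ∪ {{i, j} : 3 ≤ j ≤ n−2, 1 ≤ i ≤ j−2}. Consequently S_{(n−2,2)} = F_{{n−2}} + Σ_{i=1}^{n−3} F_{{i,n−1}} and S_{(2,n−2)} = Σ_{i=2}^{n−3} F_{{i}} + Σ_{j=3}^{n−2} Σ_{i=1}^{j−2} F_{{i,j}}. -/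
/-!
A standard composition tableau of shape `α ⊨ n` is `c ↦ n + 1 - U c`, where `U` records for each
cell the size of the composition at which it was created. Removing the last cover step shows that
for a two-row shape `U` is determined by when the cells of the short row appear: for `(a, 2)` by
the length `k` of the top row when cell `(1, 1)` appears, with `k = 0` or `2 ≤ k ≤ a` (`k = 1` is
excluded since the growing part must be the leftmost part equal to `1`); for `(2, b)` by the
lengths `2 ≤ m ≤ q ≤ b`, `3 ≤ q`, of the bottom row when `(0, 0)` and `(0, 1)` appear. The
descent sets are `{a}`, `{a + 1 - k, a + 1}`, and `{b + 2 - m}` (`m = q`),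
`{b + 1 - q, b + 2 - m}` (`m < q`); they recover the parameters and sweep out the stated families.
-/

theorem Set.singleton_eq_pair_iff {α : Type*} {x y z : α} :
    ({x} : Set α) = {y, z} ↔ x = y ∧ x = z := by
  rw [← Set.pair_eq_singleton x, Set.pair_eq_pair_iff]
  tauto

def rowFilling (k : ℕ) : ℕ × ℕ → ℕ := fun c => if c.1 = 0 ∧ c.2 < k then c.2 + 1 else 0

def hookFilling (k : ℕ) : ℕ × ℕ → ℕ := fun c =>
  if c = (1, 0) then 1 else if c.1 = 0 ∧ c.2 < k then c.2 + 2 else 0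

def fillingA (a k : ℕ) : ℕ × ℕ → ℕ := fun c =>
  if c = (1, 0) then 1 else if c = (1, 1) then k + 2
  else if c.1 = 0 ∧ c.2 < a then (if c.2 < k then c.2 + 2 else c.2 + 3) else 0

def fillingB₁ (b m : ℕ) : ℕ × ℕ → ℕ := fun c =>
  if c = (0, 0) then m + 1
  else if c.1 = 1 ∧ c.2 < b then (if c.2 < m then c.2 + 1 else c.2 + 2) else 0

def fillingB (b m q : ℕ) : ℕ × ℕ → ℕ := fun c =>
  if c = (0, 0) then m + 1 else if c = (0, 1) then q + 2
  else if c.1 = 1 ∧ c.2 < b then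
    (if c.2 < m then c.2 + 1 else if c.2 < q then c.2 + 2 else c.2 + 3) else 0

namespace SCTChain

variable {U : ℕ × ℕ → ℕ}

theorem pos {l : List ℕ} (h : SCTChain l U) : ∀ x ∈ l, 0 < x := by
  induction h with
  | nil => simp
  | prepend _ ih => simpa using ih
  | grow _ i _ _ ih =>
    intro x hx
    rcases List.mem_or_eq_of_mem_set hx with hx | rfl
    · exact ih x hx
    · omega

theorem of_eq {l l' : List ℕ} {U' : ℕ × ℕ → ℕ} (h : SCTChain l U) (hl : l = l') (hU : U = U') :
    SCTChain l' U' :=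
  hl ▸ hU ▸ h

theorem eq_zero_of_nil (h : SCTChain [] U) : U = fun _ => 0 := by
  generalize hl : ([] : List ℕ) = l at h
  cases h with
  | nil => rfl
  | prepend => simp at hl
  | grow _ i hi => simp_all

theorem cases_singleton {k : ℕ} (h : SCTChain [k] U) :
    (k = 1 ∧ U = fun c => if c = (0, 0) then 1 else 0) ∨
    ∃ k', k = k' + 1 ∧ ∃ U', SCTChain [k'] U' ∧
      U = fun c => if c = (0, k') then k' + 1 else U' c := by
  generalize hl : [k] = l at h
  cases h with
  | nil => simp at hl
  | prepend h' =>
    obtain ⟨rfl, rfl⟩ := List.cons_eq_cons.mp hl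
    refine .inl ⟨rfl, ?_⟩
    rw [h'.eq_zero_of_nil]
    funext c
    split_ifs <;> simp
  | @grow β U' h' i hi _ =>
    obtain ⟨x, rfl⟩ : ∃ x, β = [x] :=
      List.length_eq_one_iff.mp (by simpa using (congrArg List.length hl).symm)
    obtain rfl : i = 0 := by simpa using hi
    simp only [List.getD_cons_zero, List.set_cons_zero, List.cons.injEq, and_true] at hl
    subst hl
    exact .inr ⟨x, rfl, U', h', by simp⟩

theorem cases_pair {x y : ℕ} (h : SCTChain [x, y] U) :
    (x = 1 ∧ ∃ U', SCTChain [y] U' ∧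
      U = fun c => if c = (0, 0) then y + 1 else if c.1 = 0 then 0 else U' (c.1 - 1, c.2)) ∨
    (∃ x', x = x' + 1 ∧ ∃ U', SCTChain [x', y] U' ∧
      U = fun c => if c = (0, x') then x' + y + 1 else U' c) ∨
    (∃ y', y = y' + 1 ∧ x ≠ y' ∧ ∃ U', SCTChain [x, y'] U' ∧
      U = fun c => if c = (1, y') then x + y' + 1 else U' c) := by
  generalize hl : [x, y] = l at h
  cases h with
  | nil => simp at hl
  | prepend h' =>
    obtain ⟨rfl, rfl⟩ := List.cons_eq_cons.mp hl
    exact .inl ⟨rfl, _, h', by simp⟩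
  | @grow β U' h' i hi hleft =>
    obtain ⟨u, v, rfl⟩ : ∃ u v, β = [u, v] :=
      List.length_eq_two.mp (by simpa using (congrArg List.length hl).symm)
    have hi : i < 2 := by simpa using hi
    interval_cases i
    · simp only [List.getD_cons_zero, List.set_cons_zero, List.cons.injEq, and_true] at hl
      obtain ⟨rfl, rfl⟩ := hl
      exact .inr (.inl ⟨u, rfl, U', h', by simp [add_assoc]⟩)
    · simp only [List.getD_cons_succ, List.getD_cons_zero, List.set_cons_succ,
        List.set_cons_zero, List.cons.injEq, and_true] at hl
      obtain ⟨rfl, rfl⟩ := hl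
      have hne := hleft 0 one_pos
      simp only [List.getD_cons_zero, List.getD_cons_succ] at hne
      exact .inr (.inr ⟨v, rfl, hne, U', h', by simp [add_assoc]⟩)

theorem eq_rowFilling {k : ℕ} (h : SCTChain [k] U) : 0 < k ∧ U = rowFilling k := by
  induction k generalizing U with
  | zero => exact absurd (h.pos 0 (by simp)) (lt_irrefl 0)
  | succ k ih =>
    rcases h.cases_singleton with ⟨hk, rfl⟩ | ⟨k', hk, U', h', rfl⟩
    · refine ⟨k.succ_pos, funext fun c => ?_⟩
      grind [rowFilling]
    · obtain rfl : k = k' := by omega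
      obtain ⟨-, rfl⟩ := ih h'
      refine ⟨k.succ_pos, funext fun c => ?_⟩
      grind [rowFilling]

theorem eq_hookFilling {k : ℕ} (h : SCTChain [k, 1] U) : 0 < k ∧ U = hookFilling k := by
  induction k generalizing U with
  | zero => exact absurd (h.pos 0 (by simp)) (lt_irrefl 0)
  | succ k ih =>
    rcases h.cases_pair with ⟨hk, U', h', rfl⟩ | ⟨x', hk, U', h', rfl⟩ | ⟨y', hy, -, U', h', -⟩
    · obtain ⟨-, rfl⟩ := h'.eq_rowFilling
      refine ⟨k.succ_pos, funext fun c => ?_⟩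
      grind [rowFilling, hookFilling]
    · obtain rfl : k = x' := by omega
      obtain ⟨-, rfl⟩ := ih h'
      refine ⟨k.succ_pos, funext fun c => ?_⟩
      grind [hookFilling]
    · have := h'.pos y' (by simp)
      omega

theorem eq_fillingA {a : ℕ} (h : SCTChain [a, 2] U) :
    0 < a ∧ ∃ k, (k = 0 ∨ 2 ≤ k ∧ k ≤ a) ∧ U = fillingA a k := by
  induction a generalizing U with
  | zero => exact absurd (h.pos 0 (by simp)) (lt_irrefl 0)
  | succ a ih =>
    rcases h.cases_pair with ⟨ha, U', h', rfl⟩ | ⟨x', ha, U', h', rfl⟩ |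
      ⟨y', hy, hne, U', h', rfl⟩
    · obtain ⟨-, rfl⟩ := h'.eq_rowFilling
      refine ⟨a.succ_pos, 0, .inl rfl, funext fun c => ?_⟩
      grind [rowFilling, fillingA]
    · obtain rfl : a = x' := by omega
      obtain ⟨-, k, hk, rfl⟩ := ih h'
      refine ⟨a.succ_pos, k, by omega, funext fun c => ?_⟩
      grind [fillingA]
    · obtain rfl : y' = 1 := by omega
      obtain ⟨-, rfl⟩ := h'.eq_hookFilling
      refine ⟨a.succ_pos, a + 1, by omega, funext fun c => ?_⟩
      grind [hookFilling, fillingA]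

theorem eq_fillingB₁ {b : ℕ} (hb : 2 ≤ b) (h : SCTChain [1, b] U) :
    ∃ m, 2 ≤ m ∧ m ≤ b ∧ U = fillingB₁ b m := by
  induction b generalizing U with
  | zero => omega
  | succ b ih =>
    rcases h.cases_pair with ⟨-, U', h', rfl⟩ | ⟨x', hx, U', h', -⟩ | ⟨y', hy, hne, U', h', rfl⟩
    · obtain ⟨-, rfl⟩ := h'.eq_rowFilling
      refine ⟨b + 1, hb, le_rfl, funext fun c => ?_⟩
      grind [rowFilling, fillingB₁]
    · have := h'.pos x' (by simp)
      omega
    · obtain rfl : b = y' := by omega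
      obtain ⟨m, hm, hmb, rfl⟩ := ih (by have := h'.pos b (by simp); omega) h'
      refine ⟨m, hm, by omega, funext fun c => ?_⟩
      grind [fillingB₁]

theorem eq_fillingB {b : ℕ} (hb : 3 ≤ b) (h : SCTChain [2, b] U) :
    ∃ m q, 2 ≤ m ∧ m ≤ q ∧ 3 ≤ q ∧ q ≤ b ∧ U = fillingB b m q := by
  induction b generalizing U with
  | zero => omega
  | succ b ih =>
    rcases h.cases_pair with ⟨h0, -⟩ | ⟨x', hx, U', h', rfl⟩ | ⟨y', hy, hne, U', h', rfl⟩
    · omega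
    · obtain rfl : x' = 1 := by omega
      obtain ⟨m, hm, hmb, rfl⟩ := h'.eq_fillingB₁ (by omega)
      refine ⟨m, b + 1, hm, hmb, hb, le_rfl, funext fun c => ?_⟩
      grind [fillingB₁, fillingB]
    · obtain rfl : b = y' := by omega
      obtain ⟨m, q, hm, hmq, hq, hqb, rfl⟩ := ih (by have := h'.pos b (by simp); omega) h'
      refine ⟨m, q, hm, hmq, hq, by omega, funext fun c => ?_⟩
      grind [fillingB]

end SCTChain

theorem sctChain_rowFilling {k : ℕ} (hk : 0 < k) : SCTChain [k] (rowFilling k) := by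
  induction k, hk using Nat.le_induction with
  | base =>
    refine SCTChain.nil.prepend.of_eq rfl (funext fun c => ?_)
    grind [rowFilling]
  | succ k _ ih =>
    refine (ih.grow 0 (by simp) (by simp)).of_eq (by simp) (funext fun c => ?_)
    grind [rowFilling]

theorem sctChain_hookFilling {k : ℕ} (hk : 0 < k) : SCTChain [k, 1] (hookFilling k) := by
  induction k, hk using Nat.le_induction with
  | base =>
    refine (sctChain_rowFilling one_pos).prepend.of_eq rfl (funext fun c => ?_)
    grind [rowFilling, hookFilling]
  | succ k _ ih =>
    refine (ih.grow 0 (by simp) (by simp)).of_eq (by simp) (funext fun c => ?_)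
    grind [hookFilling]

theorem sctChain_fillingA_succ {a k : ℕ} (hka : k ≤ a) (h : SCTChain [a, 2] (fillingA a k)) :
    SCTChain [a + 1, 2] (fillingA (a + 1) k) := by
  refine (h.grow 0 (by simp) (by simp)).of_eq (by simp) (funext fun c => ?_)
  grind [fillingA]

theorem sctChain_fillingA {a k : ℕ} (ha : 0 < a) (hk : k = 0 ∨ 2 ≤ k ∧ k ≤ a) :
    SCTChain [a, 2] (fillingA a k) := by
  rcases hk with rfl | ⟨hk, hka⟩
  · induction a, ha using Nat.le_induction with
    | base =>
      refine (sctChain_rowFilling two_pos).prepend.of_eq rfl (funext fun c => ?_)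
      grind [rowFilling, fillingA]
    | succ a _ ih => exact sctChain_fillingA_succ (Nat.zero_le a) ih
  · induction a, hka using Nat.le_induction with
    | base =>
      refine ((sctChain_hookFilling (k := k) (by omega)).grow 1 (by simp)
        (by grind)).of_eq (by simp) (funext fun c => ?_)
      grind [hookFilling, fillingA]
    | succ a hka ih => exact sctChain_fillingA_succ hka (ih (by omega))

theorem sctChain_fillingB₁ {b m : ℕ} (hm : 2 ≤ m) (hmb : m ≤ b) :
    SCTChain [1, b] (fillingB₁ b m) := by
  induction b, hmb using Nat.le_induction with
  | base =>
    refine (sctChain_rowFilling (k := m) (by omega)).prepend.of_eq rfl (funext fun c => ?_)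
    grind [rowFilling, fillingB₁]
  | succ b hmb ih =>
    refine (ih.grow 1 (by simp) (by grind)).of_eq (by simp) (funext fun c => ?_)
    grind [fillingB₁]

theorem sctChain_fillingB {b m q : ℕ} (hm : 2 ≤ m) (hmq : m ≤ q) (hq : 3 ≤ q) (hqb : q ≤ b) :
    SCTChain [2, b] (fillingB b m q) := by
  induction b, hqb using Nat.le_induction with
  | base =>
    refine ((sctChain_fillingB₁ hm hmq).grow 0 (by simp) (by simp)).of_eq (by simp)
      (funext fun c => ?_)
    grind [fillingB₁, fillingB]
  | succ b hqb ih =>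
    refine (ih.grow 1 (by simp) (by grind)).of_eq (by simp) (funext fun c => ?_)
    grind [fillingB]

def reverseEntries (s : ℕ) (U : ℕ × ℕ → ℕ) : ℕ × ℕ → ℕ := fun c =>
  if U c = 0 then 0 else s + 1 - U c

theorem isSCT_iff_exists_sctChain {α : List ℕ} {T : ℕ × ℕ → ℕ} :
    IsSCT α T ↔ ∃ U, SCTChain α U ∧ T = reverseEntries α.sum U :=
  Iff.rfl

theorem isSCT_shape_a_two_iff {a : ℕ} {T : ℕ × ℕ → ℕ} (ha : 0 < a) :
    IsSCT [a, 2] T ↔ ∃ k, (k = 0 ∨ 2 ≤ k ∧ k ≤ a) ∧ T = reverseEntries (a + 2) (fillingA a k) := by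
  rw [isSCT_iff_exists_sctChain]
  constructor
  · rintro ⟨U, hU, rfl⟩
    obtain ⟨-, k, hk, rfl⟩ := hU.eq_fillingA
    exact ⟨k, hk, rfl⟩
  · rintro ⟨k, hk, rfl⟩
    exact ⟨_, sctChain_fillingA ha hk, rfl⟩

theorem isSCT_shape_two_b_iff {b : ℕ} {T : ℕ × ℕ → ℕ} (hb : 3 ≤ b) :
    IsSCT [2, b] T ↔ ∃ m q, 2 ≤ m ∧ m ≤ q ∧ 3 ≤ q ∧ q ≤ b ∧
      T = reverseEntries (b + 2) (fillingB b m q) := by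
  rw [isSCT_iff_exists_sctChain]
  constructor
  · rintro ⟨U, hU, rfl⟩
    obtain ⟨m, q, hm, hmq, hq, hqb, rfl⟩ := hU.eq_fillingB hb
    exact ⟨m, q, hm, hmq, hq, hqb, by simp [add_comm]⟩
  · rintro ⟨m, q, hm, hmq, hq, hqb, rfl⟩
    exact ⟨_, sctChain_fillingB hm hmq hq hqb, by simp [add_comm]⟩

theorem mem_desC_reverseEntries {s i : ℕ} {U : ℕ × ℕ → ℕ} :
    i ∈ desC (reverseEntries s U) ↔ 0 < i ∧ ∃ p q : ℕ × ℕ, U p ≠ 0 ∧ U q ≠ 0 ∧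
      s + 1 - U p = i ∧ s + 1 - U q = i + 1 ∧ p.2 ≤ q.2 := by
  simp only [desC, reverseEntries, Set.mem_ofPred_eq]
  refine and_congr_right fun hi => exists_congr fun p => exists_congr fun q => ?_
  split_ifs <;> simp_all [hi.ne]

theorem fillingA_cases {a k : ℕ} {p : ℕ × ℕ} (h : fillingA a k p ≠ 0) :
    (fillingA a k p = 1 ∧ p.1 = 1 ∧ p.2 = 0) ∨ (fillingA a k p = k + 2 ∧ p.1 = 1 ∧ p.2 = 1) ∨
    (fillingA a k p = p.2 + 2 ∧ p.1 = 0 ∧ p.2 < a ∧ p.2 < k) ∨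
    (fillingA a k p = p.2 + 3 ∧ p.1 = 0 ∧ p.2 < a ∧ k ≤ p.2) := by
  simp only [fillingA, Prod.ext_iff] at *
  split_ifs at h ⊢ <;> omega

theorem desC_fillingA_zero {a : ℕ} (ha : 0 < a) :
    desC (reverseEntries (a + 2) (fillingA a 0)) = {a} := by
  ext i
  rw [mem_desC_reverseEntries, Set.mem_singleton_iff]
  constructor
  · rintro ⟨hi, c, c', hc, hc', hci, hc'i, hle⟩
    have := fillingA_cases hc
    have := fillingA_cases hc'
    omega
  · rintro rfl
    refine ⟨ha, (0, 0), (1, 1), ?_⟩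
    grind [fillingA]

theorem desC_fillingA {a k : ℕ} (hk : 2 ≤ k) (hka : k ≤ a) :
    desC (reverseEntries (a + 2) (fillingA a k)) = {a + 1 - k, a + 1} := by
  ext i
  rw [mem_desC_reverseEntries, Set.mem_insert_iff, Set.mem_singleton_iff]
  constructor
  · rintro ⟨hi, c, c', hc, hc', hci, hc'i, hle⟩
    have := fillingA_cases hc
    have := fillingA_cases hc'
    omega
  · rintro (rfl | rfl)
    · refine ⟨by omega, (1, 1), (0, k - 1), ?_⟩
      grind [fillingA]
    · refine ⟨by omega, (0, 0), (1, 0), ?_⟩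
      grind [fillingA]

theorem fillingB_cases {b m q : ℕ} {p : ℕ × ℕ} (h : fillingB b m q p ≠ 0) :
    (fillingB b m q p = m + 1 ∧ p.1 = 0 ∧ p.2 = 0) ∨
    (fillingB b m q p = q + 2 ∧ p.1 = 0 ∧ p.2 = 1) ∨
    (fillingB b m q p = p.2 + 1 ∧ p.1 = 1 ∧ p.2 < b ∧ p.2 < m) ∨
    (fillingB b m q p = p.2 + 2 ∧ p.1 = 1 ∧ p.2 < b ∧ m ≤ p.2 ∧ p.2 < q) ∨
    (fillingB b m q p = p.2 + 3 ∧ p.1 = 1 ∧ p.2 < b ∧ q ≤ p.2) := by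
  simp only [fillingB, Prod.ext_iff] at *
  split_ifs at h ⊢ <;> omega

theorem desC_fillingB_diag {b m : ℕ} (hm : 2 ≤ m) (hmb : m ≤ b) :
    desC (reverseEntries (b + 2) (fillingB b m m)) = {b + 2 - m} := by
  ext i
  rw [mem_desC_reverseEntries, Set.mem_singleton_iff]
  constructor
  · rintro ⟨hi, c, c', hc, hc', hci, hc'i, hle⟩
    have := fillingB_cases hc
    have := fillingB_cases hc'
    omega
  · rintro rfl
    refine ⟨by omega, (0, 0), (1, m - 1), ?_⟩
    grind [fillingB]

theorem desC_fillingB {b m q : ℕ} (hm : 2 ≤ m) (hmq : m < q) (hqb : q ≤ b) :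
    desC (reverseEntries (b + 2) (fillingB b m q)) = {b + 1 - q, b + 2 - m} := by
  ext i
  rw [mem_desC_reverseEntries, Set.mem_insert_iff, Set.mem_singleton_iff]
  constructor
  · rintro ⟨hi, c, c', hc, hc', hci, hc'i, hle⟩
    have := fillingB_cases hc
    have := fillingB_cases hc'
    omega
  · rintro (rfl | rfl)
    · refine ⟨by omega, (0, 1), (1, q - 1), ?_⟩
      grind [fillingB]
    · refine ⟨by omega, (0, 0), (1, m - 1), ?_⟩
      grind [fillingB]

theorem bijOn_desC_shape_a_two {a : ℕ} (ha : 0 < a) :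
    Set.BijOn desC {T | IsSCT [a, 2] T}
      {S | S = {a} ∨ ∃ i, 1 ≤ i ∧ i ≤ a - 1 ∧ S = {i, a + 1}} := by
  refine ⟨?_, ?_, ?_⟩
  · intro T hT
    obtain ⟨k, rfl | ⟨hk, hka⟩, rfl⟩ := (isSCT_shape_a_two_iff ha).1 hT
    · exact .inl (desC_fillingA_zero ha)
    · exact .inr ⟨a + 1 - k, by omega, by omega, desC_fillingA hk hka⟩
  · intro T hT T' hT' hD
    obtain ⟨k, hk, rfl⟩ := (isSCT_shape_a_two_iff ha).1 hT
    obtain ⟨k', hk', rfl⟩ := (isSCT_shape_a_two_iff ha).1 hT'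
    suffices k = k' by rw [this]
    rcases hk with rfl | ⟨hk, hka⟩ <;> rcases hk' with rfl | ⟨hk', hka'⟩
    · rfl
    · rw [desC_fillingA_zero ha, desC_fillingA hk' hka', Set.singleton_eq_pair_iff] at hD
      omega
    · rw [desC_fillingA_zero ha, desC_fillingA hk hka, eq_comm, Set.singleton_eq_pair_iff] at hD
      omega
    · rw [desC_fillingA hk hka, desC_fillingA hk' hka', Set.pair_eq_pair_iff] at hD
      omega
  · rintro S (rfl | ⟨i, hi, hia, rfl⟩)
    · exact ⟨_, (isSCT_shape_a_two_iff ha).2 ⟨0, .inl rfl, rfl⟩, desC_fillingA_zero ha⟩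
    · refine ⟨_, (isSCT_shape_a_two_iff ha).2 ⟨a + 1 - i, .inr ⟨by omega, by omega⟩, rfl⟩, ?_⟩
      rw [desC_fillingA (by omega) (by omega), Nat.sub_sub_self (by omega)]

theorem bijOn_desC_shape_two_b {b : ℕ} (hb : 3 ≤ b) :
    Set.BijOn desC {T | IsSCT [2, b] T}
      {S | (∃ i, 2 ≤ i ∧ i ≤ b - 1 ∧ S = {i}) ∨
        ∃ i j, 3 ≤ j ∧ j ≤ b ∧ 1 ≤ i ∧ i ≤ j - 2 ∧ S = {i, j}} := by
  refine ⟨?_, ?_, ?_⟩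
  · intro T hT
    obtain ⟨m, q, hm, hmq, hq, hqb, rfl⟩ := (isSCT_shape_two_b_iff hb).1 hT
    rcases hmq.eq_or_lt with rfl | hmq
    · exact .inl ⟨b + 2 - m, by omega, by omega, desC_fillingB_diag hm hqb⟩
    · exact .inr ⟨b + 1 - q, b + 2 - m, by omega, by omega, by omega, by omega,
        desC_fillingB hm hmq hqb⟩
  · intro T hT T' hT' hD
    obtain ⟨m, q, hm, hmq, hq, hqb, rfl⟩ := (isSCT_shape_two_b_iff hb).1 hT
    obtain ⟨m', q', hm', hmq', hq', hqb', rfl⟩ := (isSCT_shape_two_b_iff hb).1 hT'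
    suffices m = m' ∧ q = q' by rw [this.1, this.2]
    rcases hmq.eq_or_lt with rfl | hmq <;> rcases hmq'.eq_or_lt with rfl | hmq'
    · rw [desC_fillingB_diag hm hqb, desC_fillingB_diag hm' hqb',
        Set.singleton_eq_singleton_iff] at hD
      omega
    · rw [desC_fillingB_diag hm hqb, desC_fillingB hm' hmq' hqb', Set.singleton_eq_pair_iff] at hD
      omega
    · rw [desC_fillingB hm hmq hqb, desC_fillingB_diag hm' hqb', eq_comm,
        Set.singleton_eq_pair_iff] at hD
      omega
    · rw [desC_fillingB hm hmq hqb, desC_fillingB hm' hmq' hqb', Set.pair_eq_pair_iff] at hD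
      omega
  · rintro S (⟨i, hi, hib, rfl⟩ | ⟨i, j, hj, hjb, hi, hij, rfl⟩)
    · refine ⟨_, (isSCT_shape_two_b_iff hb).2
        ⟨b + 2 - i, b + 2 - i, by omega, le_rfl, by omega, by omega, rfl⟩, ?_⟩
      rw [desC_fillingB_diag (by omega) (by omega), Nat.sub_sub_self (by omega)]
    · refine ⟨_, (isSCT_shape_two_b_iff hb).2
        ⟨b + 2 - j, b + 1 - i, by omega, by omega, by omega, by omega, rfl⟩, ?_⟩
      rw [desC_fillingB (by omega) (by omega) (by omega), Nat.sub_sub_self (by omega),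
        Nat.sub_sub_self (by omega)]

/-- For `n ≥ 5`: (a) `T ↦ des_c(T)` is a bijection from the SCTx of shape
`(n-2, 2)` onto `{{n-2}} ∪ {{i, n-1} : 1 ≤ i ≤ n-3}`; (b) `T ↦ des_c(T)` is
a bijection from the SCTx of shape `(2, n-2)` onto
`{{i} : 2 ≤ i ≤ n-3} ∪ {{i, j} : 3 ≤ j ≤ n-2, 1 ≤ i ≤ j-2}`. -/
theorem qs_two_row_descents_bijection (n : ℕ) (hn : 5 ≤ n) :
    (Function.Injective (fun T : {T // IsSCT [n - 2, 2] T} => desC T.1) ∧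
      Set.range (fun T : {T // IsSCT [n - 2, 2] T} => desC T.1) =
        {S : Set ℕ | S = {n - 2} ∨
          ∃ i, 1 ≤ i ∧ i ≤ n - 3 ∧ S = {i, n - 1}}) ∧
    (Function.Injective (fun T : {T // IsSCT [2, n - 2] T} => desC T.1) ∧
      Set.range (fun T : {T // IsSCT [2, n - 2] T} => desC T.1) =
        {S : Set ℕ | (∃ i, 2 ≤ i ∧ i ≤ n - 3 ∧ S = {i}) ∨
          ∃ i j, 3 ≤ j ∧ j ≤ n - 2 ∧ 1 ≤ i ∧ i ≤ j - 2 ∧ S = {i, j}}) := by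
  have hA := bijOn_desC_shape_a_two (a := n - 2) (by omega)
  have hB := bijOn_desC_shape_two_b (b := n - 2) (by omega)
  rw [show n - 2 - 1 = n - 3 by omega, show n - 2 + 1 = n - 1 by omega] at hA
  rw [show n - 2 - 1 = n - 3 by omega] at hB
  exact ⟨⟨hA.injOn.injective, (Set.range_domRestrict _ _).trans hA.image_eq⟩,
    ⟨hB.injOn.injective, (Set.range_domRestrict _ _).trans hB.image_eq⟩⟩
end

section
/- For n ≥ 7, the map T ↦ des_c(T) is a bijection from the set of standard composition tableaux of shape (n−3, 3) onto the union of {{n−3}}, {{n−4, n−2}}, {{i, n−2} : 1 ≤ i ≤ n−5}, {{i, n−1} : 2 ≤ i ≤ n−4}, and {{i, j, n−1} : i, j ∈ [n−3], i < j, j ≠ i+1}. -/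
/-!
A standard composition tableau of a two-row shape `(x, y)` is determined by its chain, and the
chain is determined by recording, for every cell `(1, c)` of the bottom row, the length `a c` of
the top row at the moment that cell is created. The cover relations of `L_C` translate into
`a 0 = 0`, `a` weakly increasing, `a c ≤ x`, and `a c ≠ c` unless `a c = 0` (the leftmost-part
rule). For the shape `(n - 3, 3)` this leaves the pairs `(a 1, a 2)` with `a 1 ≤ a 2 ≤ n - 3`,
`a 1 ≠ 1`, `a 2 ≠ 2`.

Listing the cells in the order of their creation, `i` is a descent exactly when the column does
not increase from step `n - i` to step `n + 1 - i`. This only happens next to the three cells of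
the bottom row, which produces the five families of the statement, each hit by exactly one pair.
-/

/-- `a c` is the length of the top row at the moment the cell `(1, c)` of the bottom row is
created (`0` if the top row does not exist yet). -/
structure TwoRowSchedule (x y : ℕ) (a : ℕ → ℕ) : Prop where
  zero : a 0 = 0
  mono : MonotoneOn a (Set.Iio y)
  le : ∀ c < y, a c ≤ x
  ne : ∀ c < y, a c ≠ 0 → a c ≠ c

/-- When `(1, c)` is created, `a c + c` cells exist; `(0, j)` is created after the first `j` top
cells and the bottom cells with `a c ≤ j`. The single row `[y]` is encoded as
`twoRowFilling y 0 a`. -/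
def twoRowFilling (x y : ℕ) (a : ℕ → ℕ) : ℕ × ℕ → ℕ :=
  fun c => if c.1 = 1 ∧ c.2 < y then a c.2 + c.2 + 1
    else if c.1 = 0 ∧ c.2 < x then c.2 + 1 + ((Finset.range y).filter (a · ≤ c.2)).card
    else 0

section TwoRowFilling

variable {x y : ℕ} {a : ℕ → ℕ}

lemma twoRowFilling_congr {a' : ℕ → ℕ} (h : ∀ c < y, a c = a' c) :
    twoRowFilling x y a = twoRowFilling x y a' := by
  funext ⟨r, j⟩
  have hcard : (Finset.range y).filter (a · ≤ j) = (Finset.range y).filter (a' · ≤ j) :=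
    Finset.filter_congr fun c hc => by rw [h c (Finset.mem_range.mp hc)]
  by_cases hj : j < y <;> simp [twoRowFilling, hcard, hj, h j]

lemma twoRowFilling_zero_zero : twoRowFilling 0 0 a = fun _ => 0 := by
  funext c
  simp [twoRowFilling]

lemma twoRowFilling_prepend :
    (fun c : ℕ × ℕ => if c = (0, 0) then y + 1
      else if c.1 = 0 then 0 else twoRowFilling y 0 a (c.1 - 1, c.2)) =
      twoRowFilling 1 y 0 := by
  funext ⟨r, j⟩
  simp only [twoRowFilling, Prod.mk.injEq]
  split_ifs <;> simp_all <;> omega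

lemma twoRowFilling_growTop (ha : ∀ c < y, a c ≤ x) :
    (fun c : ℕ × ℕ => if c = (0, x) then x + y + 1 else twoRowFilling x y a c) =
      twoRowFilling (x + 1) y a := by
  funext ⟨r, j⟩
  have hall : ((Finset.range y).filter (a · ≤ x)).card = y := by
    rw [Finset.filter_true_of_mem fun c hc => ha c (Finset.mem_range.mp hc), Finset.card_range]
  simp only [twoRowFilling, Prod.mk.injEq]
  split_ifs <;> simp_all <;> omega

lemma twoRowFilling_growBottom (hay : a y = x) :
    (fun c : ℕ × ℕ => if c = (1, y) then x + y + 1 else twoRowFilling x y a c) =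
      twoRowFilling x (y + 1) a := by
  funext ⟨r, j⟩
  have hfilter (hj : j < x) :
      (Finset.range (y + 1)).filter (a · ≤ j) = (Finset.range y).filter (a · ≤ j) := by
    rw [Finset.range_add_one, Finset.filter_insert, if_neg (by omega)]
  simp only [twoRowFilling, Prod.mk.injEq]
  split_ifs <;> simp_all <;> omega

end TwoRowFilling

lemma twoRowSchedule_zero {x y : ℕ} : TwoRowSchedule x y 0 where
  zero := rfl
  mono := monotoneOn_const
  le _ _ := Nat.zero_le x
  ne _ _ h := absurd rfl h

namespace TwoRowSchedule

variable {x y : ℕ} {a : ℕ → ℕ}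

lemma growTop (h : TwoRowSchedule x y a) : TwoRowSchedule (x + 1) y a :=
  { h with le := fun c hc => (h.le c hc).trans x.le_succ }

lemma dropTop (h : TwoRowSchedule (x + 1) y a) (hle : ∀ c < y, a c ≤ x) :
    TwoRowSchedule x y a :=
  { h with le := hle }

lemma growBottom (h : TwoRowSchedule x y a) (hy : 0 < y) (hxy : x ≠ y) :
    TwoRowSchedule x (y + 1) (Function.update a y x) where
  zero := by rw [Function.update_of_ne hy.ne, h.zero]
  mono c hc d hd hcd := by
    simp only [Set.mem_Iio] at hc hd
    rcases eq_or_ne d y with rfl | hdy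
    · rcases eq_or_ne c d with rfl | hcd'
      · exact le_rfl
      · rw [Function.update_self, Function.update_of_ne hcd']
        exact h.le c (by omega)
    · rw [Function.update_of_ne hdy, Function.update_of_ne (by omega)]
      exact h.mono (Set.mem_Iio.mpr (by omega)) (Set.mem_Iio.mpr (by omega)) hcd
  le c hc := by
    rcases eq_or_ne c y with rfl | hcy
    · simp
    · rw [Function.update_of_ne hcy]
      exact h.le c (by omega)
  ne c hc := by
    rcases eq_or_ne c y with rfl | hcy
    · exact fun _ => by simpa using hxy
    · rw [Function.update_of_ne hcy]
      exact h.ne c (by omega)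

lemma dropBottom (h : TwoRowSchedule x (y + 1) a) : TwoRowSchedule x y a where
  zero := h.zero
  mono := h.mono.mono fun _ hc => Set.mem_Iio.mpr (Nat.lt_succ_of_lt hc)
  le c hc := h.le c (Nat.lt_succ_of_lt hc)
  ne c hc := h.ne c (Nat.lt_succ_of_lt hc)

end TwoRowSchedule

lemma SCTChain.pos_of_mem {α : List ℕ} {U : ℕ × ℕ → ℕ} (h : SCTChain α U) :
    ∀ v ∈ α, 0 < v := by
  induction h with
  | nil => simp
  | prepend _ ih => simpa using ih
  | grow _ i _ _ ih =>
    intro v hv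
    rcases List.mem_or_eq_of_mem_set hv with hv | rfl
    exacts [ih v hv, Nat.succ_pos _]

theorem SCTChain.exists_twoRowSchedule {α : List ℕ} {U : ℕ × ℕ → ℕ} (h : SCTChain α U)
    (hα : α.length ≤ 2) :
    ∃ a, TwoRowSchedule (α.getD 0 0) (α.getD 1 0) a ∧
      U = twoRowFilling (α.getD 0 0) (α.getD 1 0) a := by
  induction h with
  | nil => exact ⟨0, twoRowSchedule_zero, twoRowFilling_zero_zero.symm⟩
  | @prepend β U _ ih =>
    refine ⟨0, twoRowSchedule_zero, ?_⟩
    obtain ⟨a, -, rfl⟩ := ih (by simp at hα; omega)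
    rcases β with _ | ⟨y, _ | _⟩
    · simpa using twoRowFilling_prepend (y := 0) (a := a)
    · simpa using twoRowFilling_prepend (y := y) (a := a)
    · simp at hα
  | @grow β U hβ i hi hleft ih =>
    obtain ⟨a, ha, rfl⟩ := ih (by simpa using hα)
    rcases β with _ | ⟨x, _ | ⟨y, _ | _⟩⟩
    · simp at hi
    · obtain rfl : i = 0 := by simpa using hi
      exact ⟨a, ha.growTop, by simpa using twoRowFilling_growTop ha.le⟩
    · obtain rfl | rfl : i = 0 ∨ i = 1 := by simp at hi; omega
      · exact ⟨a, ha.growTop, by simpa using twoRowFilling_growTop ha.le⟩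
      · have hxy : x ≠ y := by simpa using hleft 0 one_pos
        have hy : 0 < y := hβ.pos_of_mem y (by simp)
        refine ⟨_, ha.growBottom hy hxy, ?_⟩
        have hupdate : twoRowFilling x y a = twoRowFilling x y (Function.update a y x) :=
          twoRowFilling_congr fun c hc => (Function.update_of_ne hc.ne _ _).symm
        simpa [hupdate] using twoRowFilling_growBottom (Function.update_self y x a)
    · simp at hα

section Construction

variable {x y : ℕ} {U : ℕ × ℕ → ℕ}

lemma SCTChain.growOneRow (h : SCTChain [y] U) :
    SCTChain [y + 1] (fun c => if c = (0, y) then y + 1 else U c) := by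
  simpa using h.grow 0 (by simp) (by simp)

lemma SCTChain.growTop (h : SCTChain [x, y] U) :
    SCTChain [x + 1, y] (fun c => if c = (0, x) then x + y + 1 else U c) := by
  simpa using h.grow 0 (by simp) (by simp)

lemma SCTChain.growBottom (h : SCTChain [x, y] U) (hxy : x ≠ y) :
    SCTChain [x, y + 1] (fun c => if c = (1, y) then x + y + 1 else U c) := by
  simpa using h.grow 1 (by simp) (by simpa using hxy)

theorem sctChain_oneRow (hy : 1 ≤ y) : SCTChain [y] (twoRowFilling y 0 0) := by
  induction y, hy using Nat.le_induction with
  | base =>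
    rw [← twoRowFilling_prepend (y := 0) (a := 0), twoRowFilling_zero_zero]
    exact SCTChain.nil.prepend
  | succ y _ ih =>
    have hgrow := twoRowFilling_growTop (x := y) (y := 0) (a := 0) (by simp)
    simp only [Nat.add_zero] at hgrow
    simpa only [hgrow] using ih.growOneRow

end Construction

/-- Peel off the last cell created: a bottom cell if `a (y - 1) = x`, otherwise a top cell. -/
theorem sctChain_twoRowFilling {x y : ℕ} {a : ℕ → ℕ} (hx : 1 ≤ x) (hy : 1 ≤ y)
    (ha : TwoRowSchedule x y a) : SCTChain [x, y] (twoRowFilling x y a) := by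
  by_cases hlast : a (y - 1) = x
  · obtain ⟨y, rfl⟩ : ∃ y', y = y' + 1 := ⟨y - 1, by omega⟩
    simp only [Nat.add_sub_cancel] at hlast
    have hy' : 1 ≤ y := Nat.one_le_iff_ne_zero.mpr fun h => by
      subst h; rw [ha.zero] at hlast; omega
    have hxy : x ≠ y := fun h => ha.ne y (by omega) (by omega) (by omega)
    rw [← twoRowFilling_growBottom hlast]
    exact (sctChain_twoRowFilling hx hy' ha.dropBottom).growBottom hxy
  · have hlt : ∀ c < y, a c < x := fun c hc =>
      (ha.mono (Set.mem_Iio.mpr hc) (Set.mem_Iio.mpr (by omega)) (by omega)).trans_lt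
        (lt_of_le_of_ne (ha.le _ (by omega)) hlast)
    obtain rfl | ⟨x, rfl⟩ : x = 1 ∨ ∃ x', x = x' + 1 + 1 := by
      rcases Nat.eq_or_lt_of_le hx with h | h
      exacts [Or.inl h.symm, Or.inr ⟨x - 2, by omega⟩]
    · rw [twoRowFilling_congr (a' := 0) fun c hc => Nat.lt_one_iff.mp (hlt c hc),
        ← twoRowFilling_prepend (a := 0)]
      simpa using (sctChain_oneRow hy).prepend
    · rw [← twoRowFilling_growTop fun c hc => Nat.lt_succ_iff.mp (hlt c hc)]
      exact (sctChain_twoRowFilling (by omega) hy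
        (ha.dropTop fun c hc => Nat.lt_succ_iff.mp (hlt c hc))).growTop
termination_by x + y

def tableauOf (N : ℕ) (U : ℕ × ℕ → ℕ) : ℕ × ℕ → ℕ :=
  fun c => if U c = 0 then 0 else N + 1 - U c

lemma mem_desC_tableauOf_iff {N : ℕ} {U : ℕ × ℕ → ℕ} {cell : ℕ → ℕ × ℕ}
    (hcell : ∀ k, 1 ≤ k → k ≤ N → U (cell k) = k) (hU : ∀ p, U p ≠ 0 → cell (U p) = p)
    (hle : ∀ p, U p ≤ N) (i : ℕ) :
    i ∈ desC (tableauOf N U) ↔ 0 < i ∧ i < N ∧ (cell (N + 1 - i)).2 ≤ (cell (N - i)).2 := by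
  constructor
  · rintro ⟨hi, p, q, hp, hq, hpq⟩
    have hp0 : U p ≠ 0 := fun h => by simp only [tableauOf, h, if_true] at hp; omega
    have hq0 : U q ≠ 0 := fun h => by simp only [tableauOf, h, if_true] at hq; omega
    simp only [tableauOf, if_neg hp0, if_neg hq0] at hp hq
    have := hle p
    have := hle q
    rw [show N + 1 - i = U p by omega, show N - i = U q by omega, hU p hp0, hU q hq0]
    exact ⟨hi, by omega, hpq⟩
  · rintro ⟨hi, hiN, hcol⟩
    have hp := hcell (N + 1 - i) (by omega) (by omega)
    have hq := hcell (N - i) (by omega) (by omega)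
    refine ⟨hi, cell (N + 1 - i), cell (N - i), ?_, ?_, hcol⟩ <;>
      simp only [tableauOf, hp, hq] <;> split_ifs <;> omega

def pairSchedule (a1 a2 : ℕ) : ℕ → ℕ := fun c => if c = 1 then a1 else if c = 2 then a2 else 0

def IsValidPair (m a1 a2 : ℕ) : Prop := a1 ≤ a2 ∧ a2 ≤ m ∧ a1 ≠ 1 ∧ a2 ≠ 2

/-- The cell created at step `k` of the chain along `pairSchedule a1 a2`. -/
def pairCell (a1 a2 k : ℕ) : ℕ × ℕ :=
  if k = 1 then (1, 0) else if k ≤ a1 + 1 then (0, k - 2) else if k = a1 + 2 then (1, 1)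
  else if k ≤ a2 + 2 then (0, k - 3) else if k = a2 + 3 then (1, 2) else (0, k - 4)

def pairDesSet (m a1 a2 : ℕ) : Set ℕ :=
  if a1 = 0 then
    if a2 = 0 then {m} else if a2 = 1 then {m - 1, m + 1} else {m + 1 - a2, m + 1}
  else if a1 = a2 then {m + 2 - a1, m + 2} else {m + 1 - a2, m + 2 - a1, m + 2}

section ShapeThree

variable {m a1 a2 : ℕ}

lemma TwoRowSchedule.isValidPair {a : ℕ → ℕ} (h : TwoRowSchedule m 3 a) :
    IsValidPair m (a 1) (a 2) :=
  ⟨h.mono (by simp) (by simp) (by norm_num), h.le 2 (by norm_num),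
    fun h1 => h.ne 1 (by norm_num) (by omega) h1, fun h2 => h.ne 2 (by norm_num) (by omega) h2⟩

lemma TwoRowSchedule.twoRowFilling_eq_pairSchedule {a : ℕ → ℕ} (h : TwoRowSchedule m 3 a) :
    twoRowFilling m 3 a = twoRowFilling m 3 (pairSchedule (a 1) (a 2)) :=
  twoRowFilling_congr fun c hc => by
    interval_cases c <;> simp [pairSchedule, h.zero]

lemma IsValidPair.twoRowSchedule (h : IsValidPair m a1 a2) :
    TwoRowSchedule m 3 (pairSchedule a1 a2) := by
  obtain ⟨h12, h2m, h1, h2⟩ := h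
  refine ⟨rfl, fun c hc d hd hcd => ?_, fun c hc => ?_, fun c hc => ?_⟩
  · simp only [Set.mem_Iio] at hc hd
    interval_cases c <;> interval_cases d <;> simp [pairSchedule]
    exact h12
  all_goals interval_cases c <;> simp [pairSchedule] <;> omega

theorem isSCT_iff_pairSchedule (hm : 1 ≤ m) (T : ℕ × ℕ → ℕ) :
    IsSCT [m, 3] T ↔ ∃ a1 a2, IsValidPair m a1 a2 ∧
      T = tableauOf (m + 3) (twoRowFilling m 3 (pairSchedule a1 a2)) := by
  constructor
  · rintro ⟨U, hU, rfl⟩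
    obtain ⟨a, ha, rfl⟩ : ∃ a, TwoRowSchedule m 3 a ∧ U = twoRowFilling m 3 a :=
      hU.exists_twoRowSchedule (by simp)
    exact ⟨a 1, a 2, ha.isValidPair, by rw [← ha.twoRowFilling_eq_pairSchedule]; rfl⟩
  · rintro ⟨a1, a2, h, rfl⟩
    exact ⟨_, sctChain_twoRowFilling hm (by norm_num) h.twoRowSchedule, rfl⟩

@[simp] lemma twoRowFilling_pairSchedule_one_zero :
    twoRowFilling m 3 (pairSchedule a1 a2) (1, 0) = 1 := by
  simp [twoRowFilling, pairSchedule]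

@[simp] lemma twoRowFilling_pairSchedule_one_one :
    twoRowFilling m 3 (pairSchedule a1 a2) (1, 1) = a1 + 2 := by
  simp [twoRowFilling, pairSchedule]

@[simp] lemma twoRowFilling_pairSchedule_one_two :
    twoRowFilling m 3 (pairSchedule a1 a2) (1, 2) = a2 + 3 := by
  simp [twoRowFilling, pairSchedule]

lemma twoRowFilling_pairSchedule_zero {j : ℕ} (hj : j < m) :
    twoRowFilling m 3 (pairSchedule a1 a2) (0, j) =
      j + 2 + (if a1 ≤ j then 1 else 0) + (if a2 ≤ j then 1 else 0) := by
  simp only [twoRowFilling]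
  rw [Finset.card_filter]
  norm_num [Finset.sum_range_succ, pairSchedule, hj]
  omega

lemma twoRowFilling_pairSchedule_cases (p : ℕ × ℕ) :
    twoRowFilling m 3 (pairSchedule a1 a2) p = 0 ∨ p = (1, 0) ∨ p = (1, 1) ∨ p = (1, 2) ∨
      p.1 = 0 ∧ p.2 < m := by
  obtain ⟨r, j⟩ := p
  by_cases hr : r = 1 ∧ j < 3
  · obtain ⟨rfl, hj⟩ := hr
    interval_cases j <;> simp
  · by_cases h0 : r = 0 ∧ j < m
    · exact Or.inr (Or.inr (Or.inr (Or.inr h0)))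
    · left
      simp [twoRowFilling, hr, h0]

lemma twoRowFilling_pairSchedule_pairCell (h12 : a1 ≤ a2) (h2m : a2 ≤ m) {k : ℕ} (hk : 1 ≤ k)
    (hkm : k ≤ m + 3) : twoRowFilling m 3 (pairSchedule a1 a2) (pairCell a1 a2 k) = k := by
  unfold pairCell
  split_ifs <;> first
    | simp only [twoRowFilling_pairSchedule_one_zero, twoRowFilling_pairSchedule_one_one,
        twoRowFilling_pairSchedule_one_two]; omega
    | rw [twoRowFilling_pairSchedule_zero (by omega)]; split_ifs <;> omega

lemma pairCell_twoRowFilling_pairSchedule (h12 : a1 ≤ a2) {p : ℕ × ℕ}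
    (hp : twoRowFilling m 3 (pairSchedule a1 a2) p ≠ 0) :
    pairCell a1 a2 (twoRowFilling m 3 (pairSchedule a1 a2) p) = p := by
  rcases twoRowFilling_pairSchedule_cases p with h | rfl | rfl | rfl | ⟨h0, hj⟩
  · exact absurd h hp
  · simp [pairCell]
  · simp [pairCell]
  · simp only [twoRowFilling_pairSchedule_one_two, pairCell]
    split_ifs <;> simp only [Prod.mk.injEq] <;> omega
  · obtain ⟨r, j⟩ := p
    simp only at h0 hj
    subst h0
    rw [twoRowFilling_pairSchedule_zero hj, pairCell]
    split_ifs <;> simp only [Prod.mk.injEq, true_and] <;> omega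

lemma twoRowFilling_pairSchedule_le (h12 : a1 ≤ a2) (h2m : a2 ≤ m) (p : ℕ × ℕ) :
    twoRowFilling m 3 (pairSchedule a1 a2) p ≤ m + 3 := by
  rcases twoRowFilling_pairSchedule_cases p with h | rfl | rfl | rfl | ⟨h0, hj⟩
  · rw [h]
    exact Nat.zero_le _
  · simp
  · simp only [twoRowFilling_pairSchedule_one_one]
    omega
  · simp only [twoRowFilling_pairSchedule_one_two]
    omega
  · obtain ⟨r, j⟩ := p
    simp only at h0 hj
    rw [h0, twoRowFilling_pairSchedule_zero hj]
    split_ifs <;> omega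

lemma pairCell_succ_snd_le_iff (h : IsValidPair m a1 a2) {k : ℕ} (hk : 1 ≤ k) :
    (pairCell a1 a2 (k + 1)).2 ≤ (pairCell a1 a2 k).2 ↔ k = 1 ∧ a1 ≠ 0 ∨ k = a1 + 1 ∧ 2 ≤ a1 ∨
      k = 2 ∧ a1 = 0 ∧ a2 ≠ 0 ∨ k = a2 + 2 ∧ a1 < a2 ∧ 3 ≤ a2 ∨ k = a2 + 3 ∧ a2 ≤ 1 := by
  obtain ⟨h12, -, h1, h2⟩ := h
  unfold pairCell
  split_ifs <;> dsimp only <;> omega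

theorem desC_tableauOf_pairSchedule (hm : 2 ≤ m) (h : IsValidPair m a1 a2) :
    desC (tableauOf (m + 3) (twoRowFilling m 3 (pairSchedule a1 a2))) = pairDesSet m a1 a2 := by
  ext i
  rw [mem_desC_tableauOf_iff (cell := pairCell a1 a2)
    (fun k hk hkm => twoRowFilling_pairSchedule_pairCell h.1 h.2.1 hk hkm)
    (fun p hp => pairCell_twoRowFilling_pairSchedule h.1 hp)
    (twoRowFilling_pairSchedule_le h.1 h.2.1)]
  by_cases hi : 0 < i ∧ i < m + 3
  on_goal 1 =>
    rw [show m + 3 + 1 - i = m + 3 - i + 1 by omega, pairCell_succ_snd_le_iff h (by omega)]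
  all_goals
    obtain ⟨h12, h2m, h1, h2⟩ := h
    unfold pairDesSet
    split_ifs <;> simp only [Set.mem_insert_iff, Set.mem_singleton_iff] <;> omega

theorem eq_of_pairDesSet_eq {b1 b2 : ℕ} (ha : IsValidPair m a1 a2) (hb : IsValidPair m b1 b2)
    (h : pairDesSet m a1 a2 = pairDesSet m b1 b2) : a1 = b1 ∧ a2 = b2 := by
  obtain ⟨ha12, ha2m, ha1, ha2⟩ := ha
  obtain ⟨hb12, hb2m, hb1, hb2⟩ := hb
  unfold pairDesSet at h
  split_ifs at h <;>
    simp only [Set.Subset.antisymm_iff, Set.insert_subset_iff, Set.singleton_subset_iff,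
      Set.mem_insert_iff, Set.mem_singleton_iff] at h <;> omega

end ShapeThree

theorem exists_pairDesSet_eq_iff {n : ℕ} (hn : 7 ≤ n) (S : Set ℕ) :
    (∃ a1 a2, IsValidPair (n - 3) a1 a2 ∧ pairDesSet (n - 3) a1 a2 = S) ↔
      S = {n - 3} ∨ S = {n - 4, n - 2} ∨ (∃ i, 1 ≤ i ∧ i ≤ n - 5 ∧ S = {i, n - 2}) ∨
        (∃ i, 2 ≤ i ∧ i ≤ n - 4 ∧ S = {i, n - 1}) ∨
        (∃ i j, 1 ≤ i ∧ i < j ∧ j ≤ n - 3 ∧ j ≠ i + 1 ∧ S = {i, j, n - 1}) := by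
  constructor
  · rintro ⟨a1, a2, ⟨h12, h2m, h1, h2⟩, rfl⟩
    unfold pairDesSet
    split_ifs <;>
      [exact Or.inl rfl;
       refine Or.inr (Or.inl ?_);
       refine Or.inr (Or.inr (Or.inl ⟨n - 2 - a2, by omega, by omega, ?_⟩));
       refine Or.inr (Or.inr (Or.inr (Or.inl ⟨n - 1 - a1, by omega, by omega, ?_⟩)));
       refine Or.inr (Or.inr (Or.inr (Or.inr
         ⟨n - 2 - a2, n - 1 - a1, by omega, by omega, by omega, by omega, ?_⟩)))]
    all_goals ext x; simp only [Set.mem_insert_iff, Set.mem_singleton_iff]; omega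
  · rintro (rfl | rfl | ⟨i, hi1, hi2, rfl⟩ | ⟨i, hi1, hi2, rfl⟩ | ⟨i, j, hi, hij, hj, hji, rfl⟩) <;>
      [refine ⟨0, 0, ⟨le_rfl, by omega, by omega, by omega⟩, ?_⟩;
       refine ⟨0, 1, ⟨by omega, by omega, by omega, by omega⟩, ?_⟩;
       refine ⟨0, n - 2 - i, ⟨by omega, by omega, by omega, by omega⟩, ?_⟩;
       refine ⟨n - 1 - i, n - 1 - i, ⟨by omega, by omega, by omega, by omega⟩, ?_⟩;
       refine ⟨n - 1 - j, n - 2 - i, ⟨by omega, by omega, by omega, by omega⟩, ?_⟩]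
    all_goals
      unfold pairDesSet
      split_ifs <;> first
        | contradiction
        | rfl
        | ext x; simp only [Set.mem_insert_iff, Set.mem_singleton_iff]; omega

/-- For `n ≥ 7`, the map `T ↦ des_c(T)` is a bijection from the set of
standard composition tableaux of shape `(n-3, 3)` onto the union of
`{{n-3}}`, `{{n-4, n-2}}`, `{{i, n-2} : 1 ≤ i ≤ n-5}`,
`{{i, n-1} : 2 ≤ i ≤ n-4}`, and
`{{i, j, n-1} : i, j ∈ [n-3], i < j, j ≠ i+1}`. -/
theorem qs_n_minus_three_three_descents_bijection (n : ℕ) (hn : 7 ≤ n) :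
    Function.Injective (fun T : {T // IsSCT [n - 3, 3] T} => desC T.1) ∧
    Set.range (fun T : {T // IsSCT [n - 3, 3] T} => desC T.1) =
      {S : Set ℕ | S = {n - 3} ∨ S = {n - 4, n - 2} ∨
        (∃ i, 1 ≤ i ∧ i ≤ n - 5 ∧ S = {i, n - 2}) ∨
        (∃ i, 2 ≤ i ∧ i ≤ n - 4 ∧ S = {i, n - 1}) ∨
        (∃ i j, 1 ≤ i ∧ i < j ∧ j ≤ n - 3 ∧ j ≠ i + 1 ∧
          S = {i, j, n - 1})} := by
  have hshape := isSCT_iff_pairSchedule (m := n - 3) (by omega)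
  have hdes {a1 a2 : ℕ} (h : IsValidPair (n - 3) a1 a2) :=
    desC_tableauOf_pairSchedule (by omega) h
  constructor
  · rintro ⟨T, hT⟩ ⟨T', hT'⟩ h
    obtain ⟨a1, a2, ha, rfl⟩ := (hshape T).1 hT
    obtain ⟨b1, b2, hb, rfl⟩ := (hshape T').1 hT'
    obtain ⟨rfl, rfl⟩ := eq_of_pairDesSet_eq ha hb ((hdes ha).symm.trans (h.trans (hdes hb)))
    rfl
  · ext S
    rw [Set.mem_ofPred_eq, ← exists_pairDesSet_eq_iff hn]
    constructor
    · rintro ⟨⟨T, hT⟩, rfl⟩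
      obtain ⟨a1, a2, ha, rfl⟩ := (hshape T).1 hT
      exact ⟨a1, a2, ha, (hdes ha).symm⟩
    · rintro ⟨a1, a2, ha, rfl⟩
      exact ⟨⟨_, (hshape _).2 ⟨a1, a2, ha, rfl⟩⟩, hdes ha⟩
end
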